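/- arXiv:2603.19290 — 5 statements merged into one kernel-verified Lean document; each statement's English description precedes it below -/
import Mathlib

section
/- For every integer N ≥ 2 and every α > 0, the expected receptive radius of the linear-decay distribution is nonincreasing in the decay parameter: if 0 ≤ β₁ ≤ β₂ ≤ α/(N-1), then μ(Q_{N,α,β₂}) ≤ μ(Q_{N,α,β₁}). -/
/-!
Writing `A = ∑ x`, `B = ∑ x²` over `n` points, the mean of the weights `α - β x` is
`(α A - β B) / (α n - β A)`. Cross-multiplying, the comparison of two values of `β` reduces to
`α (β₂ - β₁) (n B - A²) ≥ 0`, and `A² ≤ n B` is the Cauchy–Schwarz inequality.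
-/

open Finset

section LinDecayMean

variable {ι : Type*} (s : Finset ι) (x : ι → ℝ)

/-- The receptive radius `μ(Q_{N,α,β})` is `linDecayMean (range N) Nat.cast α β`. -/
noncomputable def linDecayMean (α β : ℝ) : ℝ :=
  ∑ i ∈ s, x i * ((α - β * x i) / ∑ j ∈ s, (α - β * x j))

lemma sum_sub_mul_eq (α β : ℝ) :
    ∑ i ∈ s, (α - β * x i) = α * #s - β * ∑ i ∈ s, x i := by
  rw [sum_sub_distrib, ← mul_sum, sum_const, nsmul_eq_mul, mul_comm]

lemma linDecayMean_eq (α β : ℝ) :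
    linDecayMean s x α β =
      (α * ∑ i ∈ s, x i - β * ∑ i ∈ s, x i ^ 2) / (α * #s - β * ∑ i ∈ s, x i) := by
  have hnum : ∑ i ∈ s, x i * (α - β * x i) = α * ∑ i ∈ s, x i - β * ∑ i ∈ s, x i ^ 2 := by
    simp only [mul_sum, ← sum_sub_distrib]
    exact sum_congr rfl fun i _ => by ring
  simp only [linDecayMean, mul_div_assoc', ← sum_div, hnum, sum_sub_mul_eq]

variable {s x}

lemma linDecayMean_le_linDecayMean {α β₁ β₂ : ℝ} (hα : 0 ≤ α) (h12 : β₁ ≤ β₂)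
    (h₁ : 0 < ∑ i ∈ s, (α - β₁ * x i)) (h₂ : 0 < ∑ i ∈ s, (α - β₂ * x i)) :
    linDecayMean s x α β₂ ≤ linDecayMean s x α β₁ := by
  rw [sum_sub_mul_eq] at h₁ h₂
  rw [linDecayMean_eq, linDecayMean_eq, div_le_div_iff₀ h₂ h₁]
  have hCS := sq_sum_le_card_mul_sum_sq (s := s) (f := x)
  nlinarith [mul_nonneg (mul_nonneg hα (sub_nonneg.2 h12)) (sub_nonneg.2 hCS)]

end LinDecayMean

lemma sum_range_natCast (n : ℕ) : ∑ i ∈ range n, (i : ℝ) = n * (n - 1) / 2 := by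
  induction n with
  | zero => simp
  | succ k ih =>
    rw [sum_range_succ, ih]
    push_cast
    ring

lemma sum_range_sub_mul_natCast (n : ℕ) (α β : ℝ) :
    ∑ i ∈ range n, (α - β * i) = α * n - β * n * ((n : ℝ) - 1) / 2 := by
  rw [sum_sub_mul_eq, card_range, sum_range_natCast]
  ring

theorem linDecay_recRadius_antitone_general (N : ℕ) (hN : 2 ≤ N) (α β₁ β₂ : ℝ)
    (hα : 0 < α) (h12 : β₁ ≤ β₂) (hβ₂ : β₂ ≤ α / ((N : ℝ) - 1)) :
    ∑ Δ ∈ Finset.range N,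
        (Δ : ℝ) * ((α - β₂ * Δ) / (α * N - β₂ * N * ((N : ℝ) - 1) / 2)) ≤
      ∑ Δ ∈ Finset.range N,
        (Δ : ℝ) * ((α - β₁ * Δ) / (α * N - β₁ * N * ((N : ℝ) - 1) / 2)) := by
  have hN1 : (0 : ℝ) < N - 1 := by
    have : (2 : ℝ) ≤ N := by exact_mod_cast hN
    linarith
  have hβ₂' : β₂ * (N - 1) ≤ α := (le_div_iff₀ hN1).1 hβ₂
  have h₂ : 0 < α * N - β₂ * N * ((N : ℝ) - 1) / 2 := by nlinarith
  have h₁ : 0 < α * N - β₁ * N * ((N : ℝ) - 1) / 2 := by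
    nlinarith [mul_le_mul_of_nonneg_right h12 (by positivity : (0 : ℝ) ≤ N * (N - 1))]
  have key := linDecayMean_le_linDecayMean (s := range N) (x := Nat.cast) hα.le h12
    (by rwa [sum_range_sub_mul_natCast]) (by rwa [sum_range_sub_mul_natCast])
  simpa only [linDecayMean, sum_range_sub_mul_natCast] using key

/-- For `N ≥ 2` and `α > 0`, the expected receptive radius of the
linear-decay distribution `Q_{N,α,β}(Δ) = (α - βΔ)/S`, `S = αN - βN(N-1)/2`, is
nonincreasing in the decay parameter `β` on `[0, α/(N-1)]`. -/
theorem linDecay_recRadius_antitone (N : ℕ) (hN : 2 ≤ N) (α β₁ β₂ : ℝ)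
    (hα : 0 < α) (hβ₁0 : 0 ≤ β₁) (h12 : β₁ ≤ β₂) (hβ₂ : β₂ ≤ α / ((N : ℝ) - 1)) :
    ∑ Δ ∈ Finset.range N,
        (Δ : ℝ) * ((α - β₂ * Δ) / (α * N - β₂ * N * ((N : ℝ) - 1) / 2)) ≤
      ∑ Δ ∈ Finset.range N,
        (Δ : ℝ) * ((α - β₁ * Δ) / (α * N - β₁ * N * ((N : ℝ) - 1) / 2)) :=
  linDecay_recRadius_antitone_general N hN α β₁ β₂ hα h12 hβ₂
end

section
/- For every fixed r ∈ (0,1) there exists N₀ (one may take any integer N₀ > 3r/(1-r) + 2) such that for all integers N ≥ N₀, all α > 0 and all β with 0 ≤ β ≤ α/(N-1), the VSA expected receptive radius is strictly smaller than the SSA expected receptive radius: μ(P_{N,r}) < μ(Q_{N,α,β}). -/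
/-!
The VSA weights are a truncation of the geometric law with ratio `r`, so their mean is at most
the geometric mean `r / (1 - r)`, a constant. The SSA mean decreases in `β` and is smallest,
equal to `(N - 2) / 3`, at the extreme `β (N - 1) = α`, where the weights decay linearly to zero.
The threshold `N₀ > 3r/(1-r) + 2` is exactly the condition `r / (1 - r) < (N - 2) / 3`.
-/

open Finset

noncomputable section

def recRadius (N : ℕ) (p : ℕ → ℝ) : ℝ := ∑ Δ ∈ range N, (Δ : ℝ) * p Δ

def truncGeom (N : ℕ) (r : ℝ) (Δ : ℕ) : ℝ := (1 - r) * r ^ Δ / (1 - r ^ N)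

def linDecay (N : ℕ) (α β : ℝ) (Δ : ℕ) : ℝ :=
  (α - β * Δ) / (α * N - β * N * ((N : ℝ) - 1) / 2)

end

section Sums

variable {R : Type*} [CommRing R]

theorem sum_range_natCast_mul_pow_mul_one_sub_sq (x : R) (n : ℕ) :
    (∑ i ∈ range n, (i : R) * x ^ i) * (1 - x) ^ 2 = x - n * x ^ n + (n - 1) * x ^ (n + 1) := by
  induction n with
  | zero => simp
  | succ n ih => rw [sum_range_succ, add_mul, ih]; push_cast; ring

theorem sum_range_natCast_mul_sub_mul_mul_six (a b : R) (n : ℕ) :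
    (∑ i ∈ range n, (i : R) * (a - b * i)) * 6 = n * (n - 1) * (3 * a - b * (2 * n - 1)) := by
  induction n with
  | zero => simp
  | succ n ih => rw [sum_range_succ, add_mul, ih]; push_cast; ring

end Sums

theorem recRadius_truncGeom_le {r : ℝ} (hr₀ : 0 ≤ r) (hr₁ : r < 1) (N : ℕ) :
    recRadius N (truncGeom N r) ≤ r / (1 - r) := by
  have h1r : 0 < 1 - r := by linarith
  rcases N.eq_zero_or_pos with rfl | hN
  · simpa [recRadius] using div_nonneg hr₀ h1r.le
  have h1rN : 0 < 1 - r ^ N := by linarith [pow_lt_one₀ hr₀ hr₁ hN.ne']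
  have hmean : recRadius N (truncGeom N r) =
      (1 - r) * (∑ Δ ∈ range N, (Δ : ℝ) * r ^ Δ) / (1 - r ^ N) := by
    rw [mul_sum, sum_div]
    exact sum_congr rfl fun Δ _ => by simp only [truncGeom]; ring
  have htail : 0 ≤ (N : ℝ) * r ^ N * (1 - r) := by positivity
  rw [hmean, div_le_div_iff₀ h1rN h1r]
  linarith [pow_succ r N ▸ sum_range_natCast_mul_pow_mul_one_sub_sq r N]

theorem le_recRadius_linDecay {N : ℕ} {α β : ℝ} (hα : 0 < α)
    (hβ : β * ((N : ℝ) - 1) ≤ α) :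
    ((N : ℝ) - 2) / 3 ≤ recRadius N (linDecay N α β) := by
  rcases N.eq_zero_or_pos with rfl | hN
  · norm_num [recRadius]
  have hN' : (0 : ℝ) < N := by exact_mod_cast hN
  have hS : 0 < α * N - β * N * ((N : ℝ) - 1) / 2 := by nlinarith
  have hmean : recRadius N (linDecay N α β) =
      (∑ Δ ∈ range N, (Δ : ℝ) * (α - β * Δ)) /
        (α * N - β * N * ((N : ℝ) - 1) / 2) := by
    rw [sum_div]
    exact sum_congr rfl fun Δ _ => (mul_div_assoc _ _ _).symm
  -- with `S` the normaliser, `6 S (μ - (N - 2) / 3) = N (N + 1) (α - β (N - 1))`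
  have hgap : 0 ≤ (N : ℝ) * (N + 1) * (α - β * (N - 1)) := by
    have : 0 ≤ α - β * (N - 1) := by linarith
    positivity
  rw [hmean, div_le_div_iff₀ (by norm_num) hS]
  linarith [sum_range_natCast_mul_sub_mul_mul_six α β N]

/-- For every fixed `r ∈ (0,1)`, any integer `N₀ > 3r/(1-r) + 2` works:
for all `N ≥ N₀`, all `α > 0` and all `β ∈ [0, α/(N-1)]`, the VSA expected receptive radius
is strictly smaller than the SSA expected receptive radius: `μ(P_{N,r}) < μ(Q_{N,α,β})`. -/
theorem vsa_recRadius_lt_ssa (r : ℝ) (hr : r ∈ Set.Ioo (0 : ℝ) 1) :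
    ∃ N₀ : ℕ, (3 * r / (1 - r) + 2 < (N₀ : ℝ)) ∧
      ∀ N₀' : ℕ, 3 * r / (1 - r) + 2 < (N₀' : ℝ) →
        ∀ N : ℕ, N₀' ≤ N →
          ∀ α β : ℝ, 0 < α → 0 ≤ β → β ≤ α / ((N : ℝ) - 1) →
            ∑ Δ ∈ Finset.range N, (Δ : ℝ) * ((1 - r) * r ^ Δ / (1 - r ^ N)) <
              ∑ Δ ∈ Finset.range N,
                (Δ : ℝ) * ((α - β * Δ) / (α * N - β * N * ((N : ℝ) - 1) / 2)) := by
  obtain ⟨N₀, hN₀⟩ := exists_nat_gt (3 * r / (1 - r) + 2)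
  refine ⟨N₀, hN₀, fun N₀' hN₀' N hN α β hα _ hβ => ?_⟩
  have hN_gt : 3 * r / (1 - r) + 2 < N := hN₀'.trans_le (by exact_mod_cast hN)
  have hmean_nonneg : 0 ≤ r / (1 - r) := div_nonneg hr.1.le (by linarith [hr.2])
  rw [mul_div_assoc] at hN_gt
  have hN1 : (0 : ℝ) < N - 1 := by linarith
  calc recRadius N (truncGeom N r) ≤ r / (1 - r) := recRadius_truncGeom_le hr.1.le hr.2 N
    _ < ((N : ℝ) - 2) / 3 := by linarith
    _ ≤ recRadius N (linDecay N α β) := le_recRadius_linDecay hα ((le_div_iff₀ hN1).mp hβ)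
end

section
/- For every r ∈ (0,1) and every integer N ≥ 1, the Shannon entropy of the truncated geometric distribution has the closed form H(P_{N,r}) = log((1 - r^N)/(1-r)) - (r/(1-r)) · ((1 - N r^{N-1} + (N-1) r^N)/(1 - r^N)) · log r. -/
/-! The weights are `c r^Δ` with `c = (1 - r)/(1 - r^N)`, so `log p_Δ = log c + Δ log r` and the
entropy is `-(log c + log r · E[Δ])`. The mean `E[Δ] = c ∑ Δ r^Δ` comes from the finite
arithmetico-geometric sum `(1 - r)² ∑_{Δ<N} Δ r^Δ = r - N r^N + (N - 1) r^(N+1)`. -/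

open Finset Real

theorem sum_range_cast_mul_pow_mul_one_sub_sq {R : Type*} [CommRing R] (r : R) (N : ℕ) :
    (∑ i ∈ range N, (i : R) * r ^ i) * (1 - r) ^ 2 =
      r - N * r ^ N + (N - 1) * r ^ (N + 1) := by
  induction N with
  | zero => simp
  | succ n ih =>
    rw [sum_range_succ, add_mul, ih]
    push_cast
    ring

theorem sum_range_const_mul_pow_mul_log {c r : ℝ} (hc : c ≠ 0) (hr : r ≠ 0) (N : ℕ) :
    ∑ i ∈ range N, c * r ^ i * log (c * r ^ i) =
      log c * (c * ∑ i ∈ range N, r ^ i) +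
        log r * (c * ∑ i ∈ range N, (i : ℝ) * r ^ i) := by
  simp only [mul_sum]
  rw [← sum_add_distrib]
  refine sum_congr rfl fun i _ => ?_
  rw [log_mul hc (pow_ne_zero i hr), log_pow]
  ring

/-- Closed form for the Shannon entropy of the truncated geometric
distribution `P_{N,r}(Δ) = (1-r) r^Δ / (1 - r^N)` on `{0,…,N-1}`:
`H(P_{N,r}) = log((1 - r^N)/(1-r)) - (r/(1-r)) · ((1 - N r^{N-1} + (N-1) r^N)/(1 - r^N)) · log r`. -/
theorem truncGeom_entropy_closedForm (r : ℝ) (hr : r ∈ Set.Ioo (0 : ℝ) 1)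
    (N : ℕ) (hN : 1 ≤ N) :
    -∑ Δ ∈ Finset.range N,
        ((1 - r) * r ^ Δ / (1 - r ^ N)) * Real.log ((1 - r) * r ^ Δ / (1 - r ^ N)) =
      Real.log ((1 - r ^ N) / (1 - r)) -
        (r / (1 - r)) *
          ((1 - (N : ℝ) * r ^ (N - 1) + ((N : ℝ) - 1) * r ^ N) / (1 - r ^ N)) *
          Real.log r := by
  obtain ⟨hr0, hr1⟩ := hr
  have h1r : 0 < 1 - r := by linarith
  have h1rN : 0 < 1 - r ^ N := by linarith [pow_lt_one₀ hr0.le hr1 (by omega : N ≠ 0)]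
  have hpow : r ^ N = r * r ^ (N - 1) := by rw [← pow_succ', Nat.sub_add_cancel hN]
  have hmean : ∑ i ∈ range N, (i : ℝ) * r ^ i =
      (r - N * r ^ N + (N - 1) * r ^ (N + 1)) / (1 - r) ^ 2 :=
    (eq_div_iff (by positivity)).2 (sum_range_cast_mul_pow_mul_one_sub_sq r N)
  have hnorm : (1 - r) / (1 - r ^ N) * ∑ i ∈ range N, r ^ i = 1 := by
    rw [div_mul_eq_mul_div, mul_neg_geom_sum, div_self h1rN.ne']
  simp only [mul_div_right_comm (1 - r)]
  rw [sum_range_const_mul_pow_mul_log (by positivity) hr0.ne', hnorm, hmean,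
    log_div h1rN.ne' h1r.ne', log_div h1r.ne' h1rN.ne', pow_succ, hpow]
  field_simp
  ring
end

section
/- For every r ∈ (0,1) and every integer N ≥ 1, the Shannon entropy of the truncated geometric distribution is bounded uniformly in N: H(P_{N,r}) ≤ (1/(1-r)) · ( -log(1-r) - (r/(1-r)) log r ). -/
private lemma sum_id_mul_pow (r : ℝ) (N : ℕ) :
    (1 - r) ^ 2 * ∑ Δ ∈ Finset.range N, (Δ : ℝ) * r ^ Δ
      = r - r ^ (N + 1) - N * r ^ N * (1 - r) := by
  induction N with
  | zero => simp
  | succ n ih =>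
    rw [Finset.sum_range_succ, mul_add, ih]
    push_cast
    ring

/-- The Shannon entropy of the truncated geometric distribution is bounded
uniformly in `N`: `H(P_{N,r}) ≤ (1/(1-r)) · (-log(1-r) - (r/(1-r)) log r)`. -/
theorem truncGeom_entropy_le (r : ℝ) (hr : r ∈ Set.Ioo (0 : ℝ) 1)
    (N : ℕ) (hN : 1 ≤ N) :
    -∑ Δ ∈ Finset.range N,
        ((1 - r) * r ^ Δ / (1 - r ^ N)) * Real.log ((1 - r) * r ^ Δ / (1 - r ^ N)) ≤
      (1 / (1 - r)) * (-Real.log (1 - r) - (r / (1 - r)) * Real.log r) := by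
  obtain ⟨hr0, hr1⟩ := hr
  have h1r : (0:ℝ) < 1 - r := by linarith
  have hrN : r ^ N < 1 := pow_lt_one₀ hr0.le hr1 (by omega)
  have hq : (0:ℝ) < 1 - r ^ N := by linarith
  set c : ℝ := (1 - r) / (1 - r ^ N) with hc
  have hcpos : 0 < c := div_pos h1r hq
  have hterm : ∀ Δ ∈ Finset.range N,
      ((1 - r) * r ^ Δ / (1 - r ^ N)) * Real.log ((1 - r) * r ^ Δ / (1 - r ^ N))
      = (c * (Real.log (1 - r) - Real.log (1 - r ^ N))) * r ^ Δ
        + (c * Real.log r) * ((Δ : ℝ) * r ^ Δ) := by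
    intro Δ _
    have hp : (0:ℝ) < r ^ Δ := pow_pos hr0 Δ
    have hcr : (1 - r) * r ^ Δ / (1 - r ^ N) = c * r ^ Δ := by rw [hc]; ring
    rw [hcr, Real.log_mul hcpos.ne' hp.ne', Real.log_pow, hc,
        Real.log_div h1r.ne' hq.ne']
    ring
  rw [Finset.sum_congr rfl hterm, Finset.sum_add_distrib, ← Finset.mul_sum,
      ← Finset.mul_sum]
  have hA : ∑ Δ ∈ Finset.range N, r ^ Δ = (1 - r ^ N) / (1 - r) := by
    rw [geom_sum_eq hr1.ne]
    rw [div_eq_div_iff (by linarith) (by linarith)]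
    ring
  set B : ℝ := ∑ Δ ∈ Finset.range N, (Δ : ℝ) * r ^ Δ with hBdef
  have hBnn : 0 ≤ B := Finset.sum_nonneg fun i _ => by positivity
  have hB : B ≤ r * (1 - r ^ N) / (1 - r) ^ 2 := by
    have key := sum_id_mul_pow r N
    have hnn : 0 ≤ (N:ℝ) * r ^ N * (1 - r) := by positivity
    rw [le_div_iff₀ (by positivity)]
    have : r ^ (N + 1) = r ^ N * r := pow_succ r N
    nlinarith
  have hcA : c * ((1 - r ^ N) / (1 - r)) = 1 := by
    rw [hc]; field_simp
  rw [hA]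
  have hlogr : Real.log r < 0 := Real.log_neg hr0 hr1
  have hlog1r : Real.log (1 - r) ≤ 0 := Real.log_nonpos h1r.le (by linarith)
  have hlogq : Real.log (1 - r ^ N) ≤ 0 := Real.log_nonpos hq.le (by nlinarith [pow_pos hr0 N])
  have h3 : -((c * Real.log r) * B) ≤ (-(c * Real.log r)) * (r * (1 - r ^ N) / (1 - r) ^ 2) := by
    have : 0 ≤ -(c * Real.log r) := by nlinarith
    calc -((c * Real.log r) * B) = (-(c * Real.log r)) * B := by ring
    _ ≤ _ := mul_le_mul_of_nonneg_left hB this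
  have h4 : c * (r * (1 - r ^ N) / (1 - r) ^ 2) = r / (1 - r) := by
    rw [hc]; field_simp
  have h5 : (-(c * Real.log r)) * (r * (1 - r ^ N) / (1 - r) ^ 2)
      = (r / (1 - r)) * (-Real.log r) := by
    calc (-(c * Real.log r)) * (r * (1 - r ^ N) / (1 - r) ^ 2)
        = (c * (r * (1 - r ^ N) / (1 - r) ^ 2)) * (-Real.log r) := by ring
      _ = (r / (1 - r)) * (-Real.log r) := by rw [h4]
  have hmain : -(c * (Real.log (1 - r) - Real.log (1 - r ^ N)) * ((1 - r ^ N) / (1 - r)))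
      = -(Real.log (1 - r) - Real.log (1 - r ^ N)) := by
    calc -(c * (Real.log (1 - r) - Real.log (1 - r ^ N)) * ((1 - r ^ N) / (1 - r)))
        = -((c * ((1 - r ^ N) / (1 - r))) * (Real.log (1 - r) - Real.log (1 - r ^ N))) := by ring
      _ = _ := by rw [hcA]; ring
  have hfin : -Real.log (1 - r) + (r / (1 - r)) * (-Real.log r)
      ≤ (1 / (1 - r)) * (-Real.log (1 - r) - (r / (1 - r)) * Real.log r) := by
    have hge1 : 1 ≤ 1 / (1 - r) := by
      rw [le_div_iff₀ h1r]; linarith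
    have ht1 : 0 ≤ -Real.log (1 - r) := by linarith
    have ht2 : 0 ≤ (r / (1 - r)) * (-Real.log r) := by
      have : 0 ≤ r / (1 - r) := by positivity
      nlinarith
    nlinarith [mul_le_mul_of_nonneg_right hge1 ht1, mul_le_mul_of_nonneg_right hge1 ht2]
  calc -(c * (Real.log (1 - r) - Real.log (1 - r ^ N)) * ((1 - r ^ N) / (1 - r))
          + (c * Real.log r) * B)
      = -(c * (Real.log (1 - r) - Real.log (1 - r ^ N)) * ((1 - r ^ N) / (1 - r)))
        + -((c * Real.log r) * B) := by ring
    _ ≤ -(Real.log (1 - r) - Real.log (1 - r ^ N)) + (r / (1 - r)) * (-Real.log r) := by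
        rw [hmain]; rw [h5] at h3; linarith
    _ ≤ -Real.log (1 - r) + (r / (1 - r)) * (-Real.log r) := by linarith
    _ ≤ _ := hfin
end

section
/- For every integer N ≥ 2, every α > 0 and every β with 0 ≤ β ≤ α/(N-1), the Shannon entropy of the linear-decay distribution satisfies log N - log 2 ≤ H(Q_{N,α,β}) ≤ log N. (The lower bound follows because every probability Q_{N,α,β}(Δ) ≤ Q_{N,α,β}(0) = α/S ≤ 2/N; the upper bound is the maximal entropy on N points.) In particular the SSA attention entropy is Θ(log N). -/
lemma gauss_sum_real (n : ℕ) : ∑ Δ ∈ Finset.range n, (Δ : ℝ) = n * ((n : ℝ) - 1) / 2 := by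
  induction n with
  | zero => simp
  | succ n ih =>
    rw [Finset.sum_range_succ, ih]
    push_cast
    ring

/-- For `N ≥ 2`, `α > 0`, `0 ≤ β ≤ α/(N-1)`, the Shannon entropy of the
linear-decay distribution `Q_{N,α,β}(Δ) = (α - βΔ)/S`, `S = αN - βN(N-1)/2`, satisfies
`log N - log 2 ≤ H(Q_{N,α,β}) ≤ log N`; in particular it is `Θ(log N)`. -/
theorem linDecay_entropy_bounds (N : ℕ) (hN : 2 ≤ N) (α β : ℝ)
    (hα : 0 < α) (hβ0 : 0 ≤ β) (hβ1 : β ≤ α / ((N : ℝ) - 1))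
    (S : ℝ) (hS : S = α * N - β * N * ((N : ℝ) - 1) / 2) :
    Real.log N - Real.log 2 ≤
        -∑ Δ ∈ Finset.range N, ((α - β * Δ) / S) * Real.log ((α - β * Δ) / S) ∧
      -∑ Δ ∈ Finset.range N, ((α - β * Δ) / S) * Real.log ((α - β * Δ) / S) ≤
        Real.log N := by
  have hNR : (2 : ℝ) ≤ (N : ℝ) := by exact_mod_cast hN
  have hN1 : (0 : ℝ) < (N : ℝ) - 1 := by linarith
  have hN0 : (0 : ℝ) < (N : ℝ) := by linarith
  have hβN : β * ((N : ℝ) - 1) ≤ α := by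
    have := (le_div_iff₀ hN1).mp hβ1
    linarith
  -- S ≥ α N / 2 > 0
  have hShalf : α * N / 2 ≤ S := by
    rw [hS]
    have : β * N * ((N : ℝ) - 1) ≤ α * N := by
      have := mul_le_mul_of_nonneg_right hβN hN0.le
      nlinarith
    linarith
  have hSpos : 0 < S := lt_of_lt_of_le (by positivity) hShalf
  -- each weight is nonnegative and ≤ α
  have hw : ∀ Δ ∈ Finset.range N, 0 ≤ α - β * Δ ∧ α - β * Δ ≤ α := by
    intro Δ hΔ
    have hΔ' : (Δ : ℝ) ≤ (N : ℝ) - 1 := by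
      have : Δ + 1 ≤ N := Finset.mem_range.mp hΔ
      have : (Δ : ℝ) + 1 ≤ (N : ℝ) := by exact_mod_cast this
      linarith
    constructor
    · have : β * Δ ≤ β * ((N : ℝ) - 1) := by
        apply mul_le_mul_of_nonneg_left hΔ' hβ0
      linarith
    · nlinarith [mul_nonneg hβ0 (Nat.cast_nonneg Δ)]
  -- sum of weights
  have hsum : ∑ Δ ∈ Finset.range N, (α - β * Δ) = S := by
    rw [Finset.sum_sub_distrib, Finset.sum_const, ← Finset.mul_sum, gauss_sum_real, hS,
      Finset.card_range]
    push_cast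
    ring
  have hsump : ∑ Δ ∈ Finset.range N, ((α - β * Δ) / S) = 1 := by
    rw [← Finset.sum_div, hsum, div_self hSpos.ne']
  -- bounds on each p
  have hple : ∀ Δ ∈ Finset.range N, (α - β * Δ) / S ≤ 2 / N := by
    intro Δ hΔ
    have h1 : (α - β * Δ) / S ≤ α / S :=
      (div_le_div_iff_of_pos_right hSpos).mpr (hw Δ hΔ).2
    have h2 : α / S ≤ 2 / N := by
      rw [div_le_div_iff₀ hSpos hN0]
      linarith
    linarith
  constructor
  · -- lower bound
    have key : ∀ Δ ∈ Finset.range N,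
        ((α - β * Δ) / S) * (Real.log N - Real.log 2) ≤
          -(((α - β * Δ) / S) * Real.log ((α - β * Δ) / S)) := by
      intro Δ hΔ
      set p := (α - β * Δ) / S with hp
      have hp0 : 0 ≤ p := div_nonneg (hw Δ hΔ).1 hSpos.le
      rcases eq_or_lt_of_le hp0 with h | h
      · simp [← h]
      · have hlog : Real.log p ≤ Real.log (2 / N) := Real.log_le_log h (hple Δ hΔ)
        rw [Real.log_div (by norm_num) hN0.ne'] at hlog
        nlinarith [mul_le_mul_of_nonneg_left hlog hp0]
    calc Real.log N - Real.log 2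
        = ∑ Δ ∈ Finset.range N, ((α - β * Δ) / S) * (Real.log N - Real.log 2) := by
          rw [← Finset.sum_mul, hsump, one_mul]
      _ ≤ ∑ Δ ∈ Finset.range N, -(((α - β * Δ) / S) * Real.log ((α - β * Δ) / S)) :=
          Finset.sum_le_sum key
      _ = -∑ Δ ∈ Finset.range N, ((α - β * Δ) / S) * Real.log ((α - β * Δ) / S) := by
          rw [Finset.sum_neg_distrib]
  · -- upper bound
    have key : ∀ Δ ∈ Finset.range N,
        -(((α - β * Δ) / S) * Real.log ((α - β * Δ) / S)) ≤
          1 / N - (α - β * Δ) / S + ((α - β * Δ) / S) * Real.log N := by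
      intro Δ hΔ
      set p := (α - β * Δ) / S with hp
      have hp0 : 0 ≤ p := div_nonneg (hw Δ hΔ).1 hSpos.le
      rcases eq_or_lt_of_le hp0 with h | h
      · rw [← h]
        simp only [zero_mul, neg_zero, mul_zero, sub_zero, add_zero]
        positivity
      · have hpN : 0 < p * N := by positivity
        have h1 : Real.log (1 / (p * N)) ≤ 1 / (p * N) - 1 :=
          Real.log_le_sub_one_of_pos (by positivity)
        have h2 : Real.log (1 / (p * N)) = -(Real.log p + Real.log N) := by
          rw [one_div, Real.log_inv, Real.log_mul h.ne' hN0.ne']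
        rw [h2] at h1
        have h3 : p * (1 / (p * N)) = 1 / N := by
          field_simp
        nlinarith [mul_le_mul_of_nonneg_left h1 hp0]
    calc -∑ Δ ∈ Finset.range N, ((α - β * Δ) / S) * Real.log ((α - β * Δ) / S)
        = ∑ Δ ∈ Finset.range N, -(((α - β * Δ) / S) * Real.log ((α - β * Δ) / S)) := by
          rw [Finset.sum_neg_distrib]
      _ ≤ ∑ Δ ∈ Finset.range N, (1 / N - (α - β * Δ) / S + ((α - β * Δ) / S) * Real.log N) :=
          Finset.sum_le_sum key
      _ = Real.log N := by
          rw [Finset.sum_add_distrib, Finset.sum_sub_distrib, ← Finset.sum_mul, hsump,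
            Finset.sum_const, Finset.card_range, one_mul]
          simp only [nsmul_eq_mul]
          field_simp
          ring
end
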